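/- Uniqueness of protection levels at Nash equilibria: if x¹ and x² are two Nash equilibria of the same population game, then x¹_{d,P} = x²_{d,P} for all d ∈ 𝒟. -/

import Mathlib

open Finset

/-- The three actions: Protection, No action, Insurance. -/
inductive Act | P | N | I
deriving DecidableEq

/-- `𝒟 = {1, …, D_max}`. -/
def Dset (Dmax : ℕ) : Finset ℕ := Finset.Icc 1 Dmax

/-- Weighted degree distribution `w_d = d·m_d / ∑ d'·m_{d'}`. -/
noncomputable def wgt (Dmax : ℕ) (m : ℕ → ℝ) (d : ℕ) : ℝ :=
  (d : ℝ) * m d / ∑ d' ∈ Dset Dmax, (d' : ℝ) * m d'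

/-- `γ(x) = β_IA · ∑_d w_d (g_{d,P} p_P + (1 − g_{d,P}) p_U)`, where
`g_{d,P} = x_{d,P}/m_d`. -/
noncomputable def gam (Dmax : ℕ) (m : ℕ → ℝ) (pP pU βIA : ℝ) (xP : ℕ → ℝ) : ℝ :=
  βIA * ∑ d ∈ Dset Dmax, wgt Dmax m d * ((xP d / m d) * pP + (1 - xP d / m d) * pU)

/-- `λ(x) = β_IA · ∑_d w_d (d−1) (g_{d,P} p_P + (1 − g_{d,P}) p_U)`. -/
noncomputable def lamb (Dmax : ℕ) (m : ℕ → ℝ) (pP pU βIA : ℝ) (xP : ℕ → ℝ) : ℝ :=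
  βIA * ∑ d ∈ Dset Dmax,
    wgt Dmax m d * ((d : ℝ) - 1) * ((xP d / m d) * pP + (1 - xP d / m d) * pU)

/-- Risk exposure `e(x) = γ(x) · ∑_{k=1}^{K} λ(x)^{k−1}`. -/
noncomputable def expo (Dmax : ℕ) (m : ℕ → ℝ) (pP pU βIA : ℝ) (K : ℕ)
    (xP : ℕ → ℝ) : ℝ :=
  gam Dmax m pP pU βIA xP * ∑ k ∈ Finset.range K, lamb Dmax m pP pU βIA xP ^ k

noncomputable def Fc (LP LU cP cI ξ ded Cov A : ℝ) : ℝ :=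
  (A * LP + cP) - min (A * LU) (A * LU + cI - min Cov (ξ * max 0 (A * LU - ded)))

lemma sub_min' (a b c : ℝ) : a - min b c = max (a - b) (a - c) := by
  rcases le_total b c with h | h
  · rw [min_eq_left h, max_eq_left (by linarith)]
  · rw [min_eq_right h, max_eq_right (by linarith)]

lemma Fc_anti {LP LU cP cI ξ ded Cov : ℝ}
    (hLP : 0 < LP) (hL : LP < (1 - ξ) * LU) (hξ0 : 0 < ξ) (hξ1 : ξ ≤ 1)
    (hCov : 0 ≤ Cov) {A₂ A₁ : ℝ} (hA : A₂ < A₁) :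
    Fc LP LU cP cI ξ ded Cov A₁ < Fc LP LU cP cI ξ ded Cov A₂ := by
  have h1 : (0:ℝ) ≤ 1 - ξ := by linarith
  have h1ξ : 0 < 1 - ξ := by
    rcases h1.lt_or_eq with h | h
    · exact h
    · exfalso; rw [← h, zero_mul] at hL; linarith
  have hLU : 0 < LU := by nlinarith
  have hLPLU : LP < LU := by nlinarith
  have hdA : 0 < A₁ - A₂ := by linarith
  have hub : max 0 (A₁ * LU - ded) ≤ max 0 (A₂ * LU - ded) + (A₁ - A₂) * LU := by
    have hx : 0 < (A₁ - A₂) * LU := mul_pos hdA hLU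
    apply max_le
    · have := le_max_left (0:ℝ) (A₂ * LU - ded); linarith
    · have := le_max_right (0:ℝ) (A₂ * LU - ded); nlinarith
  have hM : min Cov (ξ * max 0 (A₁ * LU - ded))
      ≤ min Cov (ξ * max 0 (A₂ * LU - ded)) + ξ * ((A₁ - A₂) * LU) := by
    rcases le_total Cov (ξ * max 0 (A₂ * LU - ded)) with h | h
    · have h2 : 0 ≤ ξ * ((A₁ - A₂) * LU) := le_of_lt (mul_pos hξ0 (mul_pos hdA hLU))
      have := min_le_left Cov (ξ * max 0 (A₁ * LU - ded))
      rw [min_eq_left h]; linarith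
    · have := min_le_right Cov (ξ * max 0 (A₁ * LU - ded))
      rw [min_eq_right h]
      nlinarith [mul_le_mul_of_nonneg_left hub hξ0.le]
  have key1 : A₁ * LP + cP - A₁ * LU < A₂ * LP + cP - A₂ * LU := by
    nlinarith [mul_pos hdA (sub_pos.2 hLPLU)]
  have key2 : A₁ * LP + cP - (A₁ * LU + cI - min Cov (ξ * max 0 (A₁ * LU - ded)))
      < A₂ * LP + cP - (A₂ * LU + cI - min Cov (ξ * max 0 (A₂ * LU - ded))) := by
    nlinarith [hM, mul_pos hdA (sub_pos.2 hL)]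
  unfold Fc
  rw [sub_min' (A₁ * LP + cP), sub_min' (A₂ * LP + cP)]
  exact max_lt_max key1 key2

section Aux

variable {Dmax : ℕ} {m : ℕ → ℝ} {pP pU βIA : ℝ} {K : ℕ}

lemma den_pos (hD : 1 ≤ Dmax) (hm : ∀ d ∈ Dset Dmax, 0 < m d) :
    0 < ∑ d' ∈ Dset Dmax, (d' : ℝ) * m d' := by
  apply Finset.sum_pos
  · intro i hi
    have h1 : 0 < i := (Finset.mem_Icc.1 hi).1
    exact mul_pos (by exact_mod_cast h1) (hm i hi)
  · exact Finset.nonempty_Icc.2 hD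

lemma wgt_pos (hD : 1 ≤ Dmax) (hm : ∀ d ∈ Dset Dmax, 0 < m d) {d : ℕ}
    (hd : d ∈ Dset Dmax) : 0 < wgt Dmax m d := by
  have h1 : 0 < d := (Finset.mem_Icc.1 hd).1
  exact div_pos (mul_pos (by exact_mod_cast h1) (hm d hd)) (den_pos hD hm)

lemma mix_nonneg (hm : ∀ d ∈ Dset Dmax, 0 < m d) (hpP : 0 ≤ pP) (hpU : 0 ≤ pU)
    {x : ℕ → ℝ} (hx : ∀ d ∈ Dset Dmax, 0 ≤ x d ∧ x d ≤ m d) {d : ℕ} (hd : d ∈ Dset Dmax) :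
    0 ≤ (x d / m d) * pP + (1 - x d / m d) * pU := by
  have hmi := hm d hd
  have h0 : 0 ≤ x d / m d := div_nonneg (hx d hd).1 hmi.le
  have h1 : x d / m d ≤ 1 := (div_le_one hmi).2 (hx d hd).2
  nlinarith [mul_nonneg h0 hpP, mul_nonneg (by linarith : (0:ℝ) ≤ 1 - x d / m d) hpU]

lemma mix_le (hm : ∀ d ∈ Dset Dmax, 0 < m d) (hp : pP < pU)
    {x y : ℕ → ℝ} {d : ℕ} (hd : d ∈ Dset Dmax) (hxy : y d ≤ x d) :
    (x d / m d) * pP + (1 - x d / m d) * pU ≤ (y d / m d) * pP + (1 - y d / m d) * pU := by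
  have hmi := hm d hd
  have hg : y d / m d ≤ x d / m d := by gcongr
  nlinarith [mul_nonneg (sub_nonneg.2 hg) (sub_nonneg.2 hp.le)]

lemma gam_nonneg (hD : 1 ≤ Dmax) (hm : ∀ d ∈ Dset Dmax, 0 < m d)
    (hpP : 0 ≤ pP) (hpU : 0 ≤ pU) (hβ : 0 ≤ βIA)
    {x : ℕ → ℝ} (hx : ∀ d ∈ Dset Dmax, 0 ≤ x d ∧ x d ≤ m d) :
    0 ≤ gam Dmax m pP pU βIA x := by
  apply mul_nonneg hβ
  apply Finset.sum_nonneg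
  intro i hi
  exact mul_nonneg (wgt_pos hD hm hi).le (mix_nonneg hm hpP hpU hx hi)

lemma lamb_nonneg (hD : 1 ≤ Dmax) (hm : ∀ d ∈ Dset Dmax, 0 < m d)
    (hpP : 0 ≤ pP) (hpU : 0 ≤ pU) (hβ : 0 ≤ βIA)
    {x : ℕ → ℝ} (hx : ∀ d ∈ Dset Dmax, 0 ≤ x d ∧ x d ≤ m d) :
    0 ≤ lamb Dmax m pP pU βIA x := by
  apply mul_nonneg hβ
  apply Finset.sum_nonneg
  intro i hi
  have h1 : (1:ℝ) ≤ (i:ℝ) := by exact_mod_cast (Finset.mem_Icc.1 hi).1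
  exact mul_nonneg (mul_nonneg (wgt_pos hD hm hi).le (by linarith))
    (mix_nonneg hm hpP hpU hx hi)

lemma gam_le (hD : 1 ≤ Dmax) (hm : ∀ d ∈ Dset Dmax, 0 < m d)
    (hp : pP < pU) (hβ : 0 ≤ βIA)
    {x y : ℕ → ℝ} (hxy : ∀ d ∈ Dset Dmax, y d ≤ x d) :
    gam Dmax m pP pU βIA x ≤ gam Dmax m pP pU βIA y := by
  apply mul_le_mul_of_nonneg_left _ hβ
  apply Finset.sum_le_sum
  intro i hi
  exact mul_le_mul_of_nonneg_left (mix_le hm hp hi (hxy i hi)) (wgt_pos hD hm hi).le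

lemma gam_lt (hD : 1 ≤ Dmax) (hm : ∀ d ∈ Dset Dmax, 0 < m d)
    (hp : pP < pU) (hβ : 0 < βIA)
    {x y : ℕ → ℝ} (hxy : ∀ d ∈ Dset Dmax, y d ≤ x d)
    {d₀ : ℕ} (hd₀ : d₀ ∈ Dset Dmax) (hstrict : y d₀ < x d₀) :
    gam Dmax m pP pU βIA x < gam Dmax m pP pU βIA y := by
  apply mul_lt_mul_of_pos_left _ hβ
  apply Finset.sum_lt_sum
  · intro i hi
    exact mul_le_mul_of_nonneg_left (mix_le hm hp hi (hxy i hi)) (wgt_pos hD hm hi).le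
  · refine ⟨d₀, hd₀, ?_⟩
    apply mul_lt_mul_of_pos_left _ (wgt_pos hD hm hd₀)
    have hmi := hm d₀ hd₀
    have hg : y d₀ / m d₀ < x d₀ / m d₀ := by gcongr
    nlinarith [mul_pos (sub_pos.2 hg) (sub_pos.2 hp)]

lemma lamb_le (hD : 1 ≤ Dmax) (hm : ∀ d ∈ Dset Dmax, 0 < m d)
    (hp : pP < pU) (hβ : 0 ≤ βIA)
    {x y : ℕ → ℝ} (hxy : ∀ d ∈ Dset Dmax, y d ≤ x d) :
    lamb Dmax m pP pU βIA x ≤ lamb Dmax m pP pU βIA y := by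
  apply mul_le_mul_of_nonneg_left _ hβ
  apply Finset.sum_le_sum
  intro i hi
  have h1 : (1:ℝ) ≤ (i:ℝ) := by exact_mod_cast (Finset.mem_Icc.1 hi).1
  exact mul_le_mul_of_nonneg_left (mix_le hm hp hi (hxy i hi))
    (mul_nonneg (wgt_pos hD hm hi).le (by linarith))

lemma one_le_geom {l : ℝ} (hl : 0 ≤ l) (hK : 1 ≤ K) :
    1 ≤ ∑ k ∈ Finset.range K, l ^ k := by
  have h0 : (0:ℕ) ∈ Finset.range K := Finset.mem_range.2 hK
  have := Finset.single_le_sum (f := fun k => l ^ k) (fun i _ => pow_nonneg hl i) h0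
  simpa using this

lemma expo_nonneg (hD : 1 ≤ Dmax) (hm : ∀ d ∈ Dset Dmax, 0 < m d)
    (hpP : 0 ≤ pP) (hpU : 0 ≤ pU) (hβ : 0 ≤ βIA)
    {x : ℕ → ℝ} (hx : ∀ d ∈ Dset Dmax, 0 ≤ x d ∧ x d ≤ m d) :
    0 ≤ expo Dmax m pP pU βIA K x := by
  apply mul_nonneg (gam_nonneg hD hm hpP hpU hβ hx)
  exact Finset.sum_nonneg fun k _ => pow_nonneg (lamb_nonneg hD hm hpP hpU hβ hx) k

lemma expo_le (hD : 1 ≤ Dmax) (hm : ∀ d ∈ Dset Dmax, 0 < m d)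
    (hpP : 0 ≤ pP) (hp : pP < pU) (hβ : 0 < βIA) (hK : 1 ≤ K)
    {x y : ℕ → ℝ} (hx : ∀ d ∈ Dset Dmax, 0 ≤ x d ∧ x d ≤ m d)
    (hy : ∀ d ∈ Dset Dmax, 0 ≤ y d ∧ y d ≤ m d)
    (hxy : ∀ d ∈ Dset Dmax, y d ≤ x d) :
    expo Dmax m pP pU βIA K x ≤ expo Dmax m pP pU βIA K y := by
  have hpU : 0 ≤ pU := le_trans hpP hp.le
  have hlx := lamb_nonneg hD hm hpP hpU hβ.le hx
  have hS : ∑ k ∈ Finset.range K, lamb Dmax m pP pU βIA x ^ k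
      ≤ ∑ k ∈ Finset.range K, lamb Dmax m pP pU βIA y ^ k :=
    Finset.sum_le_sum fun k _ => pow_le_pow_left₀ hlx (lamb_le hD hm hp hβ.le hxy) k
  exact mul_le_mul (gam_le hD hm hp hβ.le hxy) hS
    (le_trans zero_le_one (one_le_geom hlx hK))
    (gam_nonneg hD hm hpP hpU hβ.le hy)

lemma expo_lt (hD : 1 ≤ Dmax) (hm : ∀ d ∈ Dset Dmax, 0 < m d)
    (hpP : 0 ≤ pP) (hp : pP < pU) (hβ : 0 < βIA) (hK : 1 ≤ K)
    {x y : ℕ → ℝ} (hx : ∀ d ∈ Dset Dmax, 0 ≤ x d ∧ x d ≤ m d)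
    (hy : ∀ d ∈ Dset Dmax, 0 ≤ y d ∧ y d ≤ m d)
    (hxy : ∀ d ∈ Dset Dmax, y d ≤ x d)
    {d₀ : ℕ} (hd₀ : d₀ ∈ Dset Dmax) (hstrict : y d₀ < x d₀) :
    expo Dmax m pP pU βIA K x < expo Dmax m pP pU βIA K y := by
  have hpU : 0 ≤ pU := le_trans hpP hp.le
  have hlx := lamb_nonneg hD hm hpP hpU hβ.le hx
  have hly := lamb_nonneg hD hm hpP hpU hβ.le hy
  have hS : ∑ k ∈ Finset.range K, lamb Dmax m pP pU βIA x ^ k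
      ≤ ∑ k ∈ Finset.range K, lamb Dmax m pP pU βIA y ^ k :=
    Finset.sum_le_sum fun k _ => pow_le_pow_left₀ hlx (lamb_le hD hm hp hβ.le hxy) k
  calc gam Dmax m pP pU βIA x * ∑ k ∈ Finset.range K, lamb Dmax m pP pU βIA x ^ k
      ≤ gam Dmax m pP pU βIA x * ∑ k ∈ Finset.range K, lamb Dmax m pP pU βIA y ^ k :=
        mul_le_mul_of_nonneg_left hS (gam_nonneg hD hm hpP hpU hβ.le hx)
    _ < gam Dmax m pP pU βIA y * ∑ k ∈ Finset.range K, lamb Dmax m pP pU βIA y ^ k :=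
        mul_lt_mul_of_pos_right (gam_lt hD hm hp hβ hxy hd₀ hstrict)
          (lt_of_lt_of_le one_pos (one_le_geom hly hK))

lemma expo_eq_zero_imp (hD : 1 ≤ Dmax) (hm : ∀ d ∈ Dset Dmax, 0 < m d)
    (hpP : 0 ≤ pP) (hp : pP < pU) (hβ : 0 < βIA) (hK : 1 ≤ K)
    {x : ℕ → ℝ} (hx : ∀ d ∈ Dset Dmax, 0 ≤ x d ∧ x d ≤ m d)
    (h : expo Dmax m pP pU βIA K x = 0) : ∀ d ∈ Dset Dmax, x d = m d := by
  have hpU : 0 ≤ pU := le_trans hpP hp.le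
  have hlx := lamb_nonneg hD hm hpP hpU hβ.le hx
  have hS := one_le_geom (K := K) hlx hK
  have hγ0 := gam_nonneg hD hm hpP hpU hβ.le hx
  unfold expo at h
  have hγ : gam Dmax m pP pU βIA x = 0 :=
    le_antisymm (by nlinarith [mul_nonneg hγ0 (sub_nonneg.2 hS)]) hγ0
  have hsum : ∑ d ∈ Dset Dmax,
      wgt Dmax m d * ((x d / m d) * pP + (1 - x d / m d) * pU) = 0 := by
    unfold gam at hγ
    rcases mul_eq_zero.1 hγ with h' | h'
    · exact absurd h' (ne_of_gt hβ)
    · exact h'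
  have hterm := (Finset.sum_eq_zero_iff_of_nonneg
    (fun i hi => mul_nonneg (wgt_pos hD hm hi).le (mix_nonneg hm hpP hpU hx hi))).1 hsum
  intro d hd
  have h0 := hterm d hd
  have hmix : (x d / m d) * pP + (1 - x d / m d) * pU = 0 := by
    rcases mul_eq_zero.1 h0 with h' | h'
    · exact absurd h' (ne_of_gt (wgt_pos hD hm hd))
    · exact h'
  have hmd := hm d hd
  have hg0 : 0 ≤ x d / m d := div_nonneg (hx d hd).1 hmd.le
  have hg1 : x d / m d ≤ 1 := (div_le_one hmd).2 (hx d hd).2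
  have hpU' : 0 < pU := lt_of_le_of_lt hpP hp
  have hgeq : x d / m d = 1 := by
    by_contra hne
    have hglt : x d / m d < 1 := lt_of_le_of_ne hg1 hne
    nlinarith [mul_pos (sub_pos.2 hglt) hpU', mul_nonneg hg0 hpP]
  have := (div_eq_iff (ne_of_gt hmd)).1 hgeq
  simpa using this

end Aux

/-- Cost of a degree-`d` node playing action `a` at a social state with protected
masses `xP`:  `C_{d,P} = τ(1 + d·e)L_P + c_P`, `C_{d,N} = τ(1 + d·e)L_U`,
`C_{d,I} = C_{d,N} + c_I − min(Cov_max, ξ·max(0, C_{d,N} − ded))`. -/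
noncomputable def cost (Dmax : ℕ) (m : ℕ → ℝ) (pP pU βIA τ LP LU cP cI ξ ded Cov : ℝ)
    (K : ℕ) (xP : ℕ → ℝ) (d : ℕ) : Act → ℝ
  | Act.P => τ * (1 + (d : ℝ) * expo Dmax m pP pU βIA K xP) * LP + cP
  | Act.N => τ * (1 + (d : ℝ) * expo Dmax m pP pU βIA K xP) * LU
  | Act.I => τ * (1 + (d : ℝ) * expo Dmax m pP pU βIA K xP) * LU + cI
      - min Cov (ξ * max 0 (τ * (1 + (d : ℝ) * expo Dmax m pP pU βIA K xP) * LU - ded))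

/-- Admissible social state: nonnegative masses summing to `m_d` within each population. -/
def isState (Dmax : ℕ) (m : ℕ → ℝ) (x : ℕ → Act → ℝ) : Prop :=
  ∀ d ∈ Dset Dmax, (∀ a : Act, 0 ≤ x d a) ∧ x d Act.P + x d Act.N + x d Act.I = m d

/-- Nash equilibrium: any action played by a positive mass of population `d`
minimizes the cost for population `d`. -/
def isNE (Dmax : ℕ) (m : ℕ → ℝ) (pP pU βIA τ LP LU cP cI ξ ded Cov : ℝ)
    (K : ℕ) (x : ℕ → Act → ℝ) : Prop :=
  isState Dmax m x ∧
    ∀ d ∈ Dset Dmax, ∀ a : Act, 0 < x d a →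
      ∀ a' : Act, cost Dmax m pP pU βIA τ LP LU cP cI ξ ded Cov K (fun d' => x d' Act.P) d a
        ≤ cost Dmax m pP pU βIA τ LP LU cP cI ξ ded Cov K (fun d' => x d' Act.P) d a'

section Aux2

variable {Dmax : ℕ} {m : ℕ → ℝ} {pP pU βIA τ LP LU cP cI ξ ded Cov : ℝ} {K : ℕ}
  {x : ℕ → Act → ℝ}

lemma state_Bd (hst : isState Dmax m x) :
    ∀ d ∈ Dset Dmax, 0 ≤ x d Act.P ∧ x d Act.P ≤ m d := by
  intro d hd
  obtain ⟨hnn, hsum⟩ := hst d hd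
  exact ⟨hnn Act.P, by linarith [hnn Act.N, hnn Act.I]⟩

lemma NE_Fc_nonpos (hNE : isNE Dmax m pP pU βIA τ LP LU cP cI ξ ded Cov K x)
    {d : ℕ} (hd : d ∈ Dset Dmax) (hpos : 0 < x d Act.P) :
    Fc LP LU cP cI ξ ded Cov
      (τ * (1 + (d : ℝ) * expo Dmax m pP pU βIA K (fun d' => x d' Act.P))) ≤ 0 := by
  obtain ⟨hst, hne⟩ := hNE
  have h1 := hne d hd Act.P hpos Act.N
  have h2 := hne d hd Act.P hpos Act.I
  simp only [cost] at h1 h2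
  unfold Fc
  set A := τ * (1 + (d : ℝ) * expo Dmax m pP pU βIA K (fun d' => x d' Act.P)) with hA
  linarith [le_min h1 h2]

lemma NE_Fc_nonneg (hNE : isNE Dmax m pP pU βIA τ LP LU cP cI ξ ded Cov K x)
    {d : ℕ} (hd : d ∈ Dset Dmax) (hlt : x d Act.P < m d) :
    0 ≤ Fc LP LU cP cI ξ ded Cov
      (τ * (1 + (d : ℝ) * expo Dmax m pP pU βIA K (fun d' => x d' Act.P))) := by
  obtain ⟨hst, hne⟩ := hNE
  obtain ⟨hnn, hsum⟩ := hst d hd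
  by_cases hN : 0 < x d Act.N
  · have h := hne d hd Act.N hN Act.P
    simp only [cost] at h
    unfold Fc
    set A := τ * (1 + (d : ℝ) * expo Dmax m pP pU βIA K (fun d' => x d' Act.P)) with hA
    linarith [min_le_left (A * LU)
      (A * LU + cI - min Cov (ξ * max 0 (A * LU - ded)))]
  · have hI : 0 < x d Act.I := by
      push_neg at hN
      have := hnn Act.N
      have := hnn Act.I
      have hN0 : x d Act.N = 0 := le_antisymm hN (hnn Act.N)
      rcases lt_or_eq_of_le (hnn Act.I) with h' | h'
      · exact h'
      · exfalso; linarith [h'.symm]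
    have h := hne d hd Act.I hI Act.P
    simp only [cost] at h
    unfold Fc
    set A := τ * (1 + (d : ℝ) * expo Dmax m pP pU βIA K (fun d' => x d' Act.P)) with hA
    linarith [min_le_right (A * LU)
      (A * LU + cI - min Cov (ξ * max 0 (A * LU - ded)))]

end Aux2

section Main

variable {Dmax : ℕ} {m : ℕ → ℝ} {pP pU βIA τ LP LU cP cI ξ ded Cov : ℝ} {K : ℕ}

lemma expo_not_lt (hD : 1 ≤ Dmax) (hm : ∀ d ∈ Dset Dmax, 0 < m d)
    (hpP : 0 ≤ pP) (hp : pP < pU) (hβ0 : 0 < βIA) (hK : 1 ≤ K)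
    (hτ0 : 0 < τ) (hLP : 0 < LP) (hL : LP < (1 - ξ) * LU)
    (hξ0 : 0 < ξ) (hξ1 : ξ ≤ 1) (hCov : 0 ≤ Cov)
    (x₁ x₂ : ℕ → Act → ℝ)
    (hNE₁ : isNE Dmax m pP pU βIA τ LP LU cP cI ξ ded Cov K x₁)
    (hNE₂ : isNE Dmax m pP pU βIA τ LP LU cP cI ξ ded Cov K x₂) :
    ¬ expo Dmax m pP pU βIA K (fun d' => x₂ d' Act.P)
      < expo Dmax m pP pU βIA K (fun d' => x₁ d' Act.P) := by
  intro hlt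
  have hB₁ := state_Bd hNE₁.1
  have hB₂ := state_Bd hNE₂.1
  have hpw : ∀ d ∈ Dset Dmax, x₂ d Act.P ≤ x₁ d Act.P := by
    intro d hd
    by_contra hcon
    push_neg at hcon
    have hf1 := NE_Fc_nonneg hNE₁ hd (lt_of_lt_of_le hcon (hB₂ d hd).2)
    have hf2 := NE_Fc_nonpos hNE₂ hd (lt_of_le_of_lt (hB₁ d hd).1 hcon)
    have hdpos : (0:ℝ) < (d:ℝ) := by exact_mod_cast (Finset.mem_Icc.1 hd).1
    have hAlt : τ * (1 + (d : ℝ) * expo Dmax m pP pU βIA K (fun d' => x₂ d' Act.P))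
        < τ * (1 + (d : ℝ) * expo Dmax m pP pU βIA K (fun d' => x₁ d' Act.P)) := by
      nlinarith [mul_pos (mul_pos hτ0 hdpos) (sub_pos.2 hlt)]
    have := Fc_anti (cP := cP) (cI := cI) (ded := ded) hLP hL hξ0 hξ1 hCov hAlt
    linarith
  have := expo_le hD hm hpP hp hβ0 hK hB₁ hB₂ hpw
  linarith

lemma NE_false_of_lt (hD : 1 ≤ Dmax) (hm : ∀ d ∈ Dset Dmax, 0 < m d)
    (hpP : 0 ≤ pP) (hp : pP < pU) (hβ0 : 0 < βIA) (hK : 1 ≤ K)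
    (hτ0 : 0 < τ) (hLP : 0 < LP) (hL : LP < (1 - ξ) * LU)
    (hξ0 : 0 < ξ) (hξ1 : ξ ≤ 1) (hCov : 0 ≤ Cov)
    (x₁ x₂ : ℕ → Act → ℝ)
    (hNE₁ : isNE Dmax m pP pU βIA τ LP LU cP cI ξ ded Cov K x₁)
    (hNE₂ : isNE Dmax m pP pU βIA τ LP LU cP cI ξ ded Cov K x₂)
    (he : expo Dmax m pP pU βIA K (fun d' => x₁ d' Act.P)
      = expo Dmax m pP pU βIA K (fun d' => x₂ d' Act.P))
    {d : ℕ} (hd : d ∈ Dset Dmax) (hlt : x₁ d Act.P < x₂ d Act.P) : False := by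
  have hB₁ := state_Bd hNE₁.1
  have hB₂ := state_Bd hNE₂.1
  have hpU : 0 ≤ pU := le_trans hpP hp.le
  have he0 : 0 ≤ expo Dmax m pP pU βIA K (fun d' => x₁ d' Act.P) :=
    expo_nonneg hD hm hpP hpU hβ0.le hB₁
  rcases he0.lt_or_eq with hpos | h0
  · -- e > 0
    have tie : ∀ d' ∈ Dset Dmax, x₁ d' Act.P ≠ x₂ d' Act.P →
        Fc LP LU cP cI ξ ded Cov
          (τ * (1 + (d' : ℝ) * expo Dmax m pP pU βIA K (fun d'' => x₁ d'' Act.P))) = 0 := by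
      intro d' hd' hne'
      rcases hne'.lt_or_gt with hl | hl
      · apply le_antisymm
        · rw [he]
          exact NE_Fc_nonpos hNE₂ hd' (lt_of_le_of_lt (hB₁ d' hd').1 hl)
        · exact NE_Fc_nonneg hNE₁ hd' (lt_of_lt_of_le hl (hB₂ d' hd').2)
      · apply le_antisymm
        · exact NE_Fc_nonpos hNE₁ hd' (lt_of_le_of_lt (hB₂ d' hd').1 hl)
        · rw [he]
          exact NE_Fc_nonneg hNE₂ hd' (lt_of_lt_of_le hl (hB₁ d' hd').2)
    have hothers : ∀ d' ∈ Dset Dmax, d' ≠ d → x₁ d' Act.P = x₂ d' Act.P := by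
      intro d' hd' hne'
      by_contra hdiff
      have h1 := tie d' hd' hdiff
      have h2 := tie d hd (ne_of_lt hlt)
      rcases lt_or_gt_of_ne hne' with hc | hc
      · have hcast : (d' : ℝ) < (d : ℝ) := by exact_mod_cast hc
        have hA : τ * (1 + (d' : ℝ) * expo Dmax m pP pU βIA K (fun d'' => x₁ d'' Act.P))
            < τ * (1 + (d : ℝ) * expo Dmax m pP pU βIA K (fun d'' => x₁ d'' Act.P)) := by
          nlinarith [mul_pos hτ0 (mul_pos (sub_pos.2 hcast) hpos)]
        have := Fc_anti (cP := cP) (cI := cI) (ded := ded) hLP hL hξ0 hξ1 hCov hA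
        linarith
      · have hcast : (d : ℝ) < (d' : ℝ) := by exact_mod_cast hc
        have hA : τ * (1 + (d : ℝ) * expo Dmax m pP pU βIA K (fun d'' => x₁ d'' Act.P))
            < τ * (1 + (d' : ℝ) * expo Dmax m pP pU βIA K (fun d'' => x₁ d'' Act.P)) := by
          nlinarith [mul_pos hτ0 (mul_pos (sub_pos.2 hcast) hpos)]
        have := Fc_anti (cP := cP) (cI := cI) (ded := ded) hLP hL hξ0 hξ1 hCov hA
        linarith
    have hpw : ∀ d' ∈ Dset Dmax, x₁ d' Act.P ≤ x₂ d' Act.P := by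
      intro d' hd'
      rcases eq_or_ne d' d with rfl | hne'
      · exact hlt.le
      · exact (hothers d' hd' hne').le
    have hstrict := expo_lt hD hm hpP hp hβ0 hK hB₂ hB₁ hpw hd hlt
    rw [he] at hstrict
    exact lt_irrefl _ hstrict
  · -- e = 0 : full protection
    have := expo_eq_zero_imp hD hm hpP hp hβ0 hK hB₁ h0.symm d hd
    linarith [(hB₂ d hd).2]

end Main

/-- uniqueness of protection levels at Nash equilibria: any two Nash
equilibria of the same population game have identical protected masses `x_{d,P}`. -/
theorem NE_protection_unique (Dmax : ℕ) (hD : 1 ≤ Dmax)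
    (m : ℕ → ℝ) (hm : ∀ d ∈ Dset Dmax, 0 < m d)
    (pP pU βIA τ LP LU cP cI ξ ded Cov : ℝ) (K : ℕ)
    (hpP : 0 ≤ pP) (hp : pP < pU) (hpU : pU ≤ 1)
    (hβ0 : 0 < βIA) (hβ1 : βIA ≤ 1) (hK : 1 ≤ K)
    (hτ0 : 0 < τ) (hτ1 : τ ≤ 1)
    (hLP : 0 < LP) (hL : LP < (1 - ξ) * LU)
    (hξ0 : 0 < ξ) (hξ1 : ξ ≤ 1) (hCov : 0 ≤ Cov) (hded : 0 ≤ ded)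
    (hc : cI + ded < cP)
    (x₁ x₂ : ℕ → Act → ℝ)
    (hNE₁ : isNE Dmax m pP pU βIA τ LP LU cP cI ξ ded Cov K x₁)
    (hNE₂ : isNE Dmax m pP pU βIA τ LP LU cP cI ξ ded Cov K x₂) :
    ∀ d ∈ Dset Dmax, x₁ d Act.P = x₂ d Act.P := by
  have hn1 := expo_not_lt hD hm hpP hp hβ0 hK hτ0 hLP hL hξ0 hξ1 hCov x₁ x₂ hNE₁ hNE₂
  have hn2 := expo_not_lt hD hm hpP hp hβ0 hK hτ0 hLP hL hξ0 hξ1 hCov x₂ x₁ hNE₂ hNE₁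
  have he : expo Dmax m pP pU βIA K (fun d' => x₁ d' Act.P)
      = expo Dmax m pP pU βIA K (fun d' => x₂ d' Act.P) :=
    le_antisymm (not_lt.1 hn1) (not_lt.1 hn2)
  intro d hd
  rcases lt_trichotomy (x₁ d Act.P) (x₂ d Act.P) with h | h | h
  · exact (NE_false_of_lt hD hm hpP hp hβ0 hK hτ0 hLP hL hξ0 hξ1 hCov
      x₁ x₂ hNE₁ hNE₂ he hd h).elim
  · exact h
  · exact (NE_false_of_lt hD hm hpP hp hβ0 hK hτ0 hLP hL hξ0 hξ1 hCov
      x₂ x₁ hNE₂ hNE₁ he.symm hd h).elim
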